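/- Consider DSG-1 with parameters α_k ≥ ᾱ > 0 for all k, and assume (A0) holds. (i) If σ satisfies the property that σ(w_k) ↓ 0 implies {w_k} is bounded, strong duality M_P = M_D holds, and the dual sequence {(y_k,c_k)} generated by DSG-1 is bounded, then the dual solution set S(D) is nonempty and the dual sequence converges strongly to a dual solution. (ii) If additionally (Γ₀) holds (there exists R > 0 with r_k ≤ R σ(z_k) for all k) and {σ(z_k)}, {z_k} are bounded, then S(D) ≠ ∅ implies that the dual sequence generated by DSG-1 converges strongly to a dual solution. -/

import Mathlib

open Filter Topology Bornology

noncomputable section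

/-- A real normed space is *reflexive* if the canonical embedding into its double dual is
surjective. -/
def IsReflexiveSpace (X : Type*) [NormedAddCommGroup X] [NormedSpace ℝ X] : Prop :=
  Function.Surjective ⇑(NormedSpace.inclusionInDoubleDual ℝ X)

/-- A set is *weakly compact* if it is compact in the weak topology. -/
def WCompact {X : Type*} [NormedAddCommGroup X] [NormedSpace ℝ X] (S : Set X) : Prop :=
  IsCompact (show Set (WeakSpace ℝ X) from S)

/-- A set is *weakly open* if it is open in the weak topology. -/
def WOpen {X : Type*} [NormedAddCommGroup X] [NormedSpace ℝ X] (S : Set X) : Prop :=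
  IsOpen (show Set (WeakSpace ℝ X) from S)

/-- A set of pairs is *weakly compact* if it is compact in the product of the weak
topologies. -/
def WCompact2 {X H : Type*} [NormedAddCommGroup X] [NormedSpace ℝ X]
    [NormedAddCommGroup H] [NormedSpace ℝ H] (S : Set (X × H)) : Prop :=
  IsCompact (show Set (WeakSpace ℝ X × WeakSpace ℝ H) from S)

/-- *Weak lower semicontinuity* of an extended-real-valued function. -/
def WLsc {X : Type*} [NormedAddCommGroup X] [NormedSpace ℝ X] (g : X → EReal) : Prop :=
  LowerSemicontinuous (show WeakSpace ℝ X → EReal from g)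

/-- Weak lower semicontinuity of a function of two variables, w.r.t. the product of the
weak topologies. -/
def WLsc2 {X H : Type*} [NormedAddCommGroup X] [NormedSpace ℝ X]
    [NormedAddCommGroup H] [NormedSpace ℝ H] (g : X × H → EReal) : Prop :=
  LowerSemicontinuous (show WeakSpace ℝ X × WeakSpace ℝ H → EReal from g)

/-- Weak upper semicontinuity of a real-valued function. -/
def WUsc {X : Type*} [NormedAddCommGroup X] [NormedSpace ℝ X] (g : X → ℝ) : Prop :=
  UpperSemicontinuous (show WeakSpace ℝ X → ℝ from g)

/-- Weak (sequential) convergence of a sequence: `L (u n) → L l` for every continuous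
linear functional `L`. -/
def WSeqConv {X : Type*} [NormedAddCommGroup X] [NormedSpace ℝ X] (u : ℕ → X) (l : X) : Prop :=
  ∀ L : StrongDual ℝ X, Tendsto (fun n => L (u n)) atTop (𝓝 (L l))

/-- Weak level-compactness of a dualizing parameterization `f`. -/
def WLevelCompact {X H : Type*} [NormedAddCommGroup X] [NormedSpace ℝ X]
    [NormedAddCommGroup H] [NormedSpace ℝ H] (f : X → H → EReal) : Prop :=
  ∀ (z₀ : H) (α : ℝ), ∃ U : Set H, WOpen U ∧ z₀ ∈ U ∧
    ∃ B : Set X, WCompact B ∧ ∀ z ∈ U, {x : X | f x z ≤ (α : EReal)} ⊆ B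

section Lagrangian

variable {X H : Type*} [NormedAddCommGroup H] [InnerProductSpace ℝ H]

/-- The augmented Lagrangian integrand `(x,z) ↦ f(x,z) − ⟨A z, y⟩ + c σ(z)`. -/
def lagr (f : X → H → EReal) (σ : H → EReal) (A : H → H) (y : H) (c : ℝ) (x : X) (z : H) :
    EReal :=
  f x z - ((inner ℝ (A z) y : ℝ) : EReal) + (c : EReal) * σ z

/-- The dual function `q(y,c) = inf_{x,z} (f(x,z) − ⟨A z, y⟩ + c σ(z))`. -/
def dualq (f : X → H → EReal) (σ : H → EReal) (A : H → H) (y : H) (c : ℝ) : EReal :=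
  ⨅ (x : X) (z : H), lagr f σ A y c x z

/-- The dual optimal value `M_D = sup_{(y,c) ∈ H × ℝ₊} q(y,c)`. -/
def MD (f : X → H → EReal) (σ : H → EReal) (A : H → H) : EReal :=
  ⨆ (y : H) (c : ℝ) (_ : 0 ≤ c), dualq f σ A y c

/-- `(y,c)` is a solution of the dual problem. -/
def DualSol (f : X → H → EReal) (σ : H → EReal) (A : H → H) (y : H) (c : ℝ) : Prop :=
  0 ≤ c ∧ ∀ (y' : H) (c' : ℝ), 0 ≤ c' → dualq f σ A y' c' ≤ dualq f σ A y c

/-- The function `γ_n(z) = β(z) − ⟨A z, ȳ⟩ + n σ(z)`, where `β(z) = inf_x f(x,z)`. -/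
def gam (f : X → H → EReal) (σ : H → EReal) (A : H → H) (ybar : H) (n : ℕ) (z : H) : EReal :=
  (⨅ x : X, f x z) - ((inner ℝ (A z) ybar : ℝ) : EReal) + (n : EReal) * σ z

end Lagrangian

/-- The primal optimal value `M_P = inf_x φ(x)`. -/
def MP {X : Type*} (φ : X → EReal) : EReal := ⨅ x, φ x

/-!
Each step raises `c` by at least `s_k σ(z_k) ≥ ‖y_{k+1} - y_k‖`, so a bounded dual sequence
has `c_k ↑ c̄`, `(y_k)` Cauchy with limit `ȳ`, and `s_k σ(z_k) → 0`. The stepsize rule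
`s_k ≥ min(η, ‖A z_k‖ + ‖z_k‖)` then gives `A z_k → 0` together with a subsequence along which
`z_k ⇀ 0`: either `‖z_k‖ → 0` there, or `σ(z_k) → 0`, in which case a subsequence on which
`σ(z_k)` decreases is bounded, hence weakly relatively compact, and weak lower semicontinuity
of `σ` with `argmin σ = {0}` leaves `0` as its only weak cluster point. Along it,
`f(x_k, z_k) ≤ q(y_k, c_k) + r_k + ⟨A z_k, y_k⟩`, and upper semicontinuity of `q` at `(ȳ, c̄)`
(`c̄ > 0`), weak level-compactness and weak lower semicontinuity of `f` yield
`M_P ≤ q(ȳ, c̄)`; by weak duality `(ȳ, c̄)` is a dual solution.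

For (ii), comparing the Lagrangian at `(x_k, z_k)` for the multipliers `(y_k, c_k)` and a dual
solution `(y*, c*)` gives `(c_k - c* - R) σ(z_k) ≤ ⟨A z_k, y_k - y*⟩`; with the bounds on
`σ(z_k)` and `z_k` controlling `s_k² ‖A z_k‖²` this yields
`‖y_{k+1} - y*‖² ≤ ‖y_k - y*‖² + (C - 2 c_k) s_k σ(z_k)` for a constant `C`. As
`c_{k+1} - c_k ≤ (ā + 1) s_k σ(z_k)`, the potential `(ā + 1) ‖y_k - y*‖² + 2 c_k` stops
increasing once `c_k ≥ C/2 + 1`; this bounds `c`, then `y`, and (i) applies.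
-/

theorem tendsto_zero_of_mul_min {ι : Type*} {l : Filter ι} {t : ι → ℝ} {η : ℝ} (hη : 0 < η)
    (ht : ∀ i, 0 ≤ t i) (h : Tendsto (fun i => t i * min η (t i)) l (𝓝 0)) :
    Tendsto t l (𝓝 0) := by
  have hbound : ∀ i, t i ≤ t i * min η (t i) / η + √(t i * min η (t i)) := by
    intro i
    rcases le_total η (t i) with hi | hi
    · rw [min_eq_left hi, mul_div_cancel_right₀ _ hη.ne']
      exact le_add_of_nonneg_right (Real.sqrt_nonneg _)
    · rw [min_eq_right hi, Real.sqrt_mul_self (ht i)]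
      exact le_add_of_nonneg_left (div_nonneg (mul_self_nonneg _) hη.le)
  have hlim := (h.div_const η).add h.sqrt
  rw [zero_div, Real.sqrt_zero, add_zero] at hlim
  exact squeeze_zero ht hbound hlim

theorem tendsto_zero_of_min_add_mul {ι : Type*} {l : Filter ι} {a b s : ι → ℝ} {η : ℝ}
    (hη : 0 < η) (ha : ∀ i, 0 ≤ a i) (hb : ∀ i, 0 ≤ b i) (has : ∀ i, a i ≤ s i)
    (h : Tendsto (fun i => min η (a i + b i) * s i) l (𝓝 0)) :
    Tendsto a l (𝓝 0) ∧ Tendsto (fun i => min (s i) (b i)) l (𝓝 0) := by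
  have hs : ∀ i, 0 ≤ s i := fun i => (ha i).trans (has i)
  have hmin_nonneg : ∀ t : ℝ, 0 ≤ t → 0 ≤ min η t := fun t ht => le_min hη.le ht
  constructor
  · refine tendsto_zero_of_mul_min hη ha (squeeze_zero (fun i => ?_) (fun i => ?_) h)
    · exact mul_nonneg (ha i) (hmin_nonneg _ (ha i))
    · rw [mul_comm]
      exact mul_le_mul (min_le_min_left η (le_add_of_nonneg_right (hb i))) (has i) (ha i)
        (hmin_nonneg _ (add_nonneg (ha i) (hb i)))
  · refine tendsto_zero_of_mul_min hη (fun i => le_min (hs i) (hb i))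
      (squeeze_zero (fun i => ?_) (fun i => ?_) h)
    · exact mul_nonneg (le_min (hs i) (hb i)) (hmin_nonneg _ (le_min (hs i) (hb i)))
    · rw [mul_comm]
      exact mul_le_mul
        (min_le_min_left η ((min_le_right _ _).trans (le_add_of_nonneg_left (ha i))))
        (min_le_left _ _) (le_min (hs i) (hb i)) (hmin_nonneg _ (add_nonneg (ha i) (hb i)))

theorem exists_strictMono_antitone_comp {s : ℕ → ℝ} (hs_pos : ∀ k, 0 < s k)
    (hs : Tendsto s atTop (𝓝 0)) : ∃ φ : ℕ → ℕ, StrictMono φ ∧ Antitone (s ∘ φ) := by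
  obtain ⟨g, hinc | hnoninc⟩ := exists_increasing_or_nonincreasing_subseq (· < ·) s
  · obtain ⟨N, hN⟩ := ((hs.comp g.strictMono.tendsto_atTop).eventually_lt_const
      (hs_pos (g 0))).exists_forall_of_atTop
    exact absurd (hinc 0 (N + 1) N.succ_pos) (hN (N + 1) N.le_succ).not_gt
  · exact ⟨g, g.strictMono,
      antitone_nat_of_succ_le fun n => not_lt.mp (hnoninc n (n + 1) n.lt_succ_self)⟩

theorem cauchySeq_of_dist_le_sub {α : Type*} [PseudoMetricSpace α] {u : ℕ → α} {c : ℕ → ℝ}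
    {M : ℝ} (hcM : ∀ k, c k ≤ M) (hdist : ∀ k, dist (u k) (u (k + 1)) ≤ c (k + 1) - c k) :
    CauchySeq u := by
  refine cauchySeq_of_dist_le_of_summable _ hdist <|
    summable_of_sum_range_le (c := M - c 0) (fun k => dist_nonneg.trans (hdist k)) fun n => ?_
  rw [Finset.sum_range_sub]
  linarith [hcM n]

section Potential

variable {c d e : ℕ → ℝ} {C : ℝ}

theorem bddAbove_range_of_potential {K : ℝ} (hc : Monotone c) (hK : 0 ≤ K) (hd : ∀ k, 0 ≤ d k)
    (hcd : ∀ k, c (k + 1) - c k ≤ K * d k) (he : ∀ k, 0 ≤ e k)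
    (hrec : ∀ k, e (k + 1) ≤ e k + (C - 2 * c k) * d k) : BddAbove (Set.range c) := by
  by_cases hlarge : ∃ N, C / 2 + 1 ≤ c N
  · obtain ⟨N, hN⟩ := hlarge
    -- beyond `N` the potential `K e + 2 c` is nonincreasing
    have hW : ∀ j, K * e (N + j) + 2 * c (N + j) ≤ K * e N + 2 * c N := by
      intro j
      induction j with
      | zero => rfl
      | succ j ih =>
        rw [← add_assoc]
        have hcj : C / 2 + 1 ≤ c (N + j) := hN.trans (hc (Nat.le_add_right N j))
        have := mul_le_mul_of_nonneg_left (hrec (N + j)) hK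
        have := mul_nonneg (mul_nonneg hK (hd (N + j))) (by linarith : 0 ≤ 2 * c (N + j) - C - 2)
        linarith [hcd (N + j)]
    refine ⟨max (c N) ((K * e N + 2 * c N) / 2), ?_⟩
    rintro _ ⟨k, rfl⟩
    rcases le_total k N with hk | hk
    · exact (hc hk).trans (le_max_left _ _)
    · obtain ⟨j, rfl⟩ := Nat.exists_eq_add_of_le hk
      linarith [hW j, mul_nonneg hK (he (N + j)), le_max_right (c N) ((K * e N + 2 * c N) / 2)]
  · simp only [not_exists, not_le] at hlarge
    exact ⟨C / 2 + 1, by rintro _ ⟨k, rfl⟩; exact (hlarge k).le⟩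

theorem le_add_mul_sub_of_potential (hc : Monotone c) (hd : ∀ k, 0 ≤ d k)
    (hdc : ∀ k, d k ≤ c (k + 1) - c k) (hrec : ∀ k, e (k + 1) ≤ e k + (C - 2 * c k) * d k)
    (k : ℕ) : e k ≤ e 0 + |C - 2 * c 0| * (c k - c 0) := by
  induction k with
  | zero => simp
  | succ k ih =>
    have hCk : C - 2 * c k ≤ |C - 2 * c 0| :=
      (by linarith [hc k.zero_le] : C - 2 * c k ≤ C - 2 * c 0).trans (le_abs_self _)
    have := mul_le_mul_of_nonneg_right hCk (hd k)
    have := mul_le_mul_of_nonneg_left (hdc k) (abs_nonneg (C - 2 * c 0))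
    linarith [hrec k]

end Potential

theorem MapClusterPt.prodMk_of_tendsto {ι α β : Type*} [TopologicalSpace α]
    [TopologicalSpace β] {F : Filter ι} {u : ι → α} {v : ι → β} {a : α} {b : β}
    (hu : MapClusterPt a F u) (hv : Tendsto v F (𝓝 b)) :
    MapClusterPt (a, b) F fun i => (u i, v i) := by
  rw [((𝓝 a).basis_sets.prod_nhds (𝓝 b).basis_sets).mapClusterPt_iff_frequently]
  rintro ⟨s, t⟩ ⟨hs, ht⟩
  exact ((mapClusterPt_iff_frequently.mp hu s hs).and_eventually (hv ht)).mono
    fun _ h => ⟨h.1, h.2⟩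

theorem LowerSemicontinuousAt.le_of_mapClusterPt {ι α : Type*} [TopologicalSpace α]
    {F : Filter ι} {u : ι → α} {p : α} {g : α → EReal} {b : EReal}
    (hg : LowerSemicontinuousAt g p) (hp : MapClusterPt p F u) (hb : ∀ᶠ i in F, g (u i) ≤ b) :
    g p ≤ b := by
  by_contra! h
  obtain ⟨i, hi, hib⟩ := (hp.frequently (hg b h)).and_eventually hb |>.exists
  exact hi.not_ge hib

theorem wCompact_closedBall {H : Type*} [NormedAddCommGroup H] [InnerProductSpace ℝ H]
    [CompleteSpace H] (R : ℝ) : WCompact (Metric.closedBall (0 : H) R) := by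
  -- Banach–Alaoglu, transported to `H` through the Riesz isomorphism `H ≃ H*`
  let e := InnerProductSpace.toDual ℝ H
  let Φ : WeakDual ℝ H → WeakSpace ℝ H :=
    fun w => toWeakSpace ℝ H (e.symm (WeakDual.toStrongDual w))
  have hΦ : Continuous Φ := by
    refine WeakBilin.continuous_of_continuous_eval _ fun L => ?_
    have heval : ∀ w : StrongDual ℝ H, L (e.symm w) = w (e.symm L) := fun w => by
      rw [← InnerProductSpace.toDual_symm_apply (x := e.symm w) (y := L), real_inner_comm,
        InnerProductSpace.toDual_symm_apply]
    show Continuous fun w : WeakDual ℝ H => L (e.symm (WeakDual.toStrongDual w))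
    simp_rw [heval]
    exact WeakDual.eval_continuous (e.symm L)
  unfold WCompact
  convert (WeakDual.isCompact_closedBall 0 R).image hΦ using 1
  ext v
  constructor
  · intro hv
    refine ⟨e ((toWeakSpace ℝ H).symm v), ?_, ?_⟩
    · change e ((toWeakSpace ℝ H).symm v) ∈ Metric.closedBall (0 : StrongDual ℝ H) R
      rw [mem_closedBall_zero_iff, e.norm_map]
      exact mem_closedBall_zero_iff.mp hv
    · change toWeakSpace ℝ H (e.symm (e ((toWeakSpace ℝ H).symm v))) = v
      rw [e.symm_apply_apply, LinearEquiv.apply_symm_apply]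
  · rintro ⟨w, hw, rfl⟩
    change e.symm (WeakDual.toStrongDual w) ∈ Metric.closedBall (0 : H) R
    rw [mem_closedBall_zero_iff, e.symm.norm_map]
    exact mem_closedBall_zero_iff.mp hw

theorem WLsc.tendsto_toWeakSpace_zero {H ι : Type*} [NormedAddCommGroup H]
    [InnerProductSpace ℝ H] [CompleteSpace H] {g : H → EReal} (hg : WLsc g)
    (hg_nonneg : ∀ v, 0 ≤ g v) (hg_eq_zero : ∀ v, g v = 0 → v = 0)
    {F : Filter ι} {w : ι → H} {M : ℝ} (hw : ∀ i, ‖w i‖ ≤ M)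
    (hgw : Tendsto (fun i => g (w i)) F (𝓝 0)) :
    Tendsto (fun i => toWeakSpaceCLM ℝ H (w i)) F (𝓝 0) := by
  refine (wCompact_closedBall M).tendsto_nhds_of_unique_mapClusterPt
    (Eventually.of_forall fun i => mem_closedBall_zero_iff.mpr (hw i)) fun v _ hv => ?_
  refine hg_eq_zero v (le_antisymm ?_ (hg_nonneg v))
  refine EReal.le_of_forall_lt_iff_le.mp fun ε hε =>
    LowerSemicontinuousAt.le_of_mapClusterPt (hg v) hv ?_
  exact (hgw.eventually (gt_mem_nhds hε)).mono fun _ h => h.le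

theorem WLevelCompact.exists_le_of_tendsto {X H ι : Type*} [NormedAddCommGroup X]
    [NormedSpace ℝ X] [NormedAddCommGroup H] [NormedSpace ℝ H] {f : X → H → EReal}
    (hflev : WLevelCompact f) (hflsc : WLsc2 fun p : X × H => f p.1 p.2)
    {F : Filter ι} [F.NeBot] {x : ι → X} {z : ι → H} {μ : ℝ}
    (hz : Tendsto (fun i => toWeakSpaceCLM ℝ H (z i)) F (𝓝 0))
    (hfμ : ∀ᶠ i in F, f (x i) (z i) ≤ μ) : ∃ x₀, f x₀ 0 ≤ μ := by
  obtain ⟨U, hU, hU0, B, hB, hUB⟩ := hflev 0 μ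
  have hxB : ∀ᶠ i in F, toWeakSpaceCLM ℝ X (x i) ∈ (show Set (WeakSpace ℝ X) from B) := by
    filter_upwards [hz.eventually (hU.mem_nhds hU0), hfμ] with i hzi hfi
    exact hUB (z i) hzi hfi
  obtain ⟨x₀, -, hx₀⟩ := hB.exists_mapClusterPt (le_principal_iff.mpr hxB)
  exact ⟨x₀, LowerSemicontinuousAt.le_of_mapClusterPt
    (g := fun p : WeakSpace ℝ X × WeakSpace ℝ H => f p.1 p.2) (hflsc (x₀, 0))
    (hx₀.prodMk_of_tendsto hz) hfμ⟩

theorem map_zero_eq_zero_of_norm_le {H : Type*} [NormedAddCommGroup H] {σ : H → EReal}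
    {A : H → H} (hσ0 : σ 0 = 0) (hA : ∀ z, (‖A z‖ : EReal) ≤ σ z) : A 0 = 0 := by
  have h := hA 0
  rw [hσ0, ← EReal.coe_zero, EReal.coe_le_coe_iff] at h
  exact norm_le_zero_iff.mp h

section Lagrangian

variable {X H : Type*} [NormedAddCommGroup H] [InnerProductSpace ℝ H]
  {f : X → H → EReal} {σ : H → EReal} {A : H → H}

theorem dualq_le_lagr (y : H) (c : ℝ) (x : X) (z : H) :
    dualq f σ A y c ≤ lagr f σ A y c x z :=
  (iInf_le _ x).trans (iInf_le _ z)

theorem dualq_le_MP {φ : X → EReal} (hdual : ∀ x, f x 0 = φ x) (hσ0 : σ 0 = 0) (hA : A 0 = 0)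
    (y : H) (c : ℝ) : dualq f σ A y c ≤ MP φ :=
  le_iInf fun x => (dualq_le_lagr y c x 0).trans_eq <| by
    simp [lagr, hdual, hσ0, hA]

theorem lagr_eq_coe {x : X} {z : H} {fv s : ℝ} (hf : f x z = fv) (hσ : σ z = s) (y : H) (c : ℝ) :
    lagr f σ A y c x z = ((fv - inner ℝ (A z) y + c * s : ℝ) : EReal) := by
  rw [lagr, hf, hσ, ← EReal.coe_mul, ← EReal.coe_sub, ← EReal.coe_add]

theorem le_of_lagr_le {y : H} {c : ℝ} {x : X} {z : H} {u : ℝ} (hc : 0 ≤ c) (hσ : 0 ≤ σ z)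
    (h : lagr f σ A y c x z ≤ u) : f x z ≤ ((u + inner ℝ (A z) y : ℝ) : EReal) := by
  have hsub : f x z - ((inner ℝ (A z) y : ℝ) : EReal) ≤ u :=
    (le_add_of_nonneg_right (EReal.mul_nonneg (EReal.coe_nonneg.mpr hc) hσ)).trans h
  rwa [EReal.sub_le_iff_le_add (.inl (EReal.coe_ne_bot _)) (.inl (EReal.coe_ne_top _)),
    ← EReal.coe_add] at hsub

theorem sub_mul_le_inner_of_lagr {y y' : H} {c c' : ℝ} {x : X} {z : H} {s u v : ℝ}
    (hσ : σ z = s) (hu : lagr f σ A y c x z ≤ u) (hv : (v : EReal) ≤ lagr f σ A y' c' x z) :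
    (c - c') * s ≤ inner ℝ (A z) (y - y') + (u - v) := by
  induction hf : f x z using EReal.rec with
  | bot => simp [lagr, hf, hσ] at hv
  | top =>
    rw [lagr, hf, hσ, EReal.top_sub_coe, ← EReal.coe_mul, EReal.top_add_coe] at hu
    exact absurd hu (EReal.coe_lt_top u).not_ge
  | coe fv =>
    rw [lagr_eq_coe hf hσ, EReal.coe_le_coe_iff] at hu hv
    rw [inner_sub_right]
    linarith

theorem upperSemicontinuousAt_lagr (x : X) (z : H) (hf : f x z ≠ ⊥) (hσ : 0 ≤ σ z)
    {p : H × ℝ} (hp : 0 < p.2) :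
    UpperSemicontinuousAt (fun q : H × ℝ => lagr f σ A q.1 q.2 x z) p := by
  have of_eq_top : lagr f σ A p.1 p.2 x z = ⊤ →
      UpperSemicontinuousAt (fun q : H × ℝ => lagr f σ A q.1 q.2 x z) p :=
    fun h b hb => by simp only [h, not_top_lt] at hb
  induction hfx : f x z using EReal.rec with
  | bot => exact absurd hfx hf
  | top =>
    refine of_eq_top ?_
    rw [lagr, hfx, EReal.top_sub_coe]
    exact EReal.top_add_of_ne_bot <|
      ne_bot_of_le_ne_bot EReal.zero_ne_bot (EReal.mul_nonneg (EReal.coe_nonneg.mpr hp.le) hσ)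
  | coe fv =>
    induction hσz : σ z using EReal.rec with
    | bot => exact absurd (hσz ▸ hσ) (by simp)
    | top =>
      refine of_eq_top ?_
      rw [lagr, hfx, hσz, EReal.coe_mul_top_of_pos hp, ← EReal.coe_sub]
      exact EReal.add_top_of_ne_bot (EReal.coe_ne_bot _)
    | coe s =>
      simp_rw [lagr_eq_coe hfx hσz]
      exact (continuous_coe_real_ereal.comp (by fun_prop)).continuousAt.upperSemicontinuousAt

theorem upperSemicontinuousAt_dualq (hf : ∀ x z, f x z ≠ ⊥) (hσ : ∀ z, 0 ≤ σ z) {p : H × ℝ}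
    (hp : 0 < p.2) : UpperSemicontinuousAt (fun q : H × ℝ => dualq f σ A q.1 q.2) p :=
  upperSemicontinuousAt_iInf fun x => upperSemicontinuousAt_iInf fun z =>
    upperSemicontinuousAt_lagr x z (hf x z) (hσ z) hp

end Lagrangian

theorem MP_le_dualq_of_tendsto {X H : Type*} [NormedAddCommGroup X] [NormedSpace ℝ X]
    [NormedAddCommGroup H] [InnerProductSpace ℝ H] {φ : X → EReal} {f : X → H → EReal}
    {σ : H → EReal} {A : H → H} (hdual : ∀ x, f x 0 = φ x) (hfbot : ∀ x z, f x z ≠ ⊥)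
    (hflsc : WLsc2 fun p : X × H => f p.1 p.2) (hflev : WLevelCompact f) (hσ : ∀ z, 0 ≤ σ z)
    {x : ℕ → X} {z y : ℕ → H} {c r : ℕ → ℝ} {yl : H} {cl : ℝ}
    (hxz : ∀ k, lagr f σ A (y k) (c k) (x k) (z k) ≤ dualq f σ A (y k) (c k) + (r k : EReal))
    (hc : ∀ k, 0 ≤ c k) (hy : Tendsto y atTop (𝓝 yl)) (hcl : Tendsto c atTop (𝓝 cl))
    (hcl_pos : 0 < cl) (hr : Tendsto r atTop (𝓝 0)) {F : Filter ℕ} [F.NeBot] (hF : F ≤ atTop)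
    (hAz : Tendsto (fun k => A (z k)) F (𝓝 0))
    (hz : Tendsto (fun k => toWeakSpaceCLM ℝ H (z k)) F (𝓝 0)) :
    MP φ ≤ dualq f σ A yl cl := by
  refine EReal.le_of_forall_lt_iff_le.mp fun ν hν => ?_
  obtain ⟨μ, hqμ, hμν⟩ := EReal.exists_between_coe_real hν
  have hq : ∀ᶠ k in atTop, dualq f σ A (y k) (c k) < μ :=
    (hy.prodMk_nhds hcl).eventually (upperSemicontinuousAt_dualq hfbot hσ hcl_pos μ hqμ)
  have hfk : ∀ᶠ k in atTop,
      f (x k) (z k) ≤ ((μ + r k + inner ℝ (A (z k)) (y k) : ℝ) : EReal) := by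
    filter_upwards [hq] with k hk
    refine le_of_lagr_le (hc k) (hσ _) ((hxz k).trans ?_)
    rw [EReal.coe_add]
    exact add_le_add_left hk.le _
  have hlim : Tendsto (fun k => μ + r k + inner ℝ (A (z k)) (y k)) F (𝓝 μ) := by
    simpa using (tendsto_const_nhds.add (hr.mono_left hF)).add (hAz.inner (hy.mono_left hF))
  obtain ⟨x₀, hx₀⟩ := hflev.exists_le_of_tendsto hflsc hz
    (((hfk.filter_mono hF).and (hlim.eventually (gt_mem_nhds (EReal.coe_lt_coe_iff.mp hμν)))).mono
      fun k hk => hk.1.trans (EReal.coe_le_coe_iff.mpr hk.2.le))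
  exact (iInf_le _ x₀).trans ((hdual x₀) ▸ hx₀)

theorem exists_le_atTop_tendsto_toWeakSpace_zero {H : Type*} [NormedAddCommGroup H]
    [InnerProductSpace ℝ H] [CompleteSpace H] {σ : H → EReal} (hσwlsc : WLsc σ)
    (hσpos : ∀ v, 0 ≤ σ v) (hσargmin : ∀ v, σ v = 0 → v = 0)
    (hbdd : ∀ w : ℕ → H, Antitone (fun k => σ (w k)) →
      Tendsto (fun k => σ (w k)) atTop (𝓝 (0 : EReal)) → ∃ M : ℝ, ∀ k, ‖w k‖ ≤ M)
    {z : ℕ → H} {s : ℕ → ℝ} (hs : ∀ k, (s k : EReal) = σ (z k)) (hs_pos : ∀ k, 0 < s k)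
    (hmin : Tendsto (fun k => min (s k) ‖z k‖) atTop (𝓝 0)) :
    ∃ F : Filter ℕ, F.NeBot ∧ F ≤ atTop ∧
      Tendsto (fun k => toWeakSpaceCLM ℝ H (z k)) F (𝓝 0) := by
  by_cases hfreq : ∃ᶠ k in atTop, ‖z k‖ ≤ s k
  · refine ⟨atTop ⊓ 𝓟 {k | ‖z k‖ ≤ s k}, frequently_mem_iff_neBot.mp hfreq, inf_le_left, ?_⟩
    have hz : Tendsto z (atTop ⊓ 𝓟 {k | ‖z k‖ ≤ s k}) (𝓝 0) := by
      refine tendsto_zero_iff_norm_tendsto_zero.mpr <| (hmin.mono_left inf_le_left).congr' ?_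
      rw [EventuallyEq, eventually_inf_principal]
      exact Eventually.of_forall fun k hk => min_eq_right hk
    exact ((toWeakSpaceCLM ℝ H).continuous.tendsto' 0 0 (map_zero _)).comp hz
  · rw [not_frequently] at hfreq
    have hs0 : Tendsto s atTop (𝓝 0) :=
      hmin.congr' (hfreq.mono fun k hk => min_eq_left (not_le.mp hk).le)
    -- `hbdd` only applies along a subsequence on which `σ ∘ z` decreases
    obtain ⟨φ, hφ, hanti⟩ := exists_strictMono_antitone_comp hs_pos hs0
    have hσφ : Tendsto (fun n => σ (z (φ n))) atTop (𝓝 0) := by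
      simpa only [← hs, Function.comp, EReal.coe_zero] using
        EReal.tendsto_coe.mpr (hs0.comp hφ.tendsto_atTop)
    obtain ⟨M, hM⟩ := hbdd (z ∘ φ)
      (fun m n hmn => by simpa only [Function.comp, ← hs, EReal.coe_le_coe_iff] using hanti hmn)
      hσφ
    exact ⟨map φ atTop, map_neBot, hφ.tendsto_atTop,
      tendsto_map'_iff.mpr (hσwlsc.tendsto_toWeakSpace_zero hσpos hσargmin hM hσφ)⟩

/-- A run of DSG-1: `σz k` is the value `σ (z k)`, finite along the run, and `lagr_le` says
`(x k, z k) ∈ X_{r k}(y k, c k)`. -/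
structure IsDSG1 {X H : Type*} [NormedAddCommGroup H] [InnerProductSpace ℝ H]
    (f : X → H → EReal) (σ : H → EReal) (A : H → H) (η βs abar : ℝ)
    (x : ℕ → X) (z y : ℕ → H) (c st a r σz : ℕ → ℝ) : Prop where
  sigma_eq : ∀ k, (σz k : EReal) = σ (z k)
  a_pos : ∀ k, 0 < a k
  a_lt : ∀ k, a k < abar
  st_pos : ∀ k, 0 < st k
  r_tendsto : Tendsto r atTop (𝓝 0)
  c_zero_nonneg : 0 ≤ c 0
  lagr_le : ∀ k, lagr f σ A (y k) (c k) (x k) (z k) ≤ dualq f σ A (y k) (c k) + (r k : EReal)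
  y_succ : ∀ k, y (k + 1) = y k - st k • A (z k)
  c_succ : ∀ k, c (k + 1) = c k + (a k + 1) * st k * σz k
  min_le_st : ∀ k, min η (‖A (z k)‖ + ‖z k‖) ≤ st k
  st_le_max : ∀ k, st k ≤ max βs (σz k + ‖z k‖)
  z_ne_zero : ∀ k, z k ≠ 0

namespace IsDSG1

variable {X H : Type*} [NormedAddCommGroup H] [InnerProductSpace ℝ H]
  {φ : X → EReal} {f : X → H → EReal} {σ : H → EReal} {A : H → H} {η βs abar : ℝ}
  {x : ℕ → X} {z y : ℕ → H} {c st a r σz : ℕ → ℝ}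

theorem sigma_pos (run : IsDSG1 f σ A η βs abar x z y c st a r σz) (hσpos : ∀ v, 0 ≤ σ v)
    (hσargmin : ∀ v, σ v = 0 → v = 0) (k : ℕ) : 0 < σz k := by
  have h := hσpos (z k)
  rw [← run.sigma_eq k, EReal.coe_nonneg] at h
  refine h.lt_of_ne fun h0 => run.z_ne_zero k (hσargmin _ ?_)
  rw [← run.sigma_eq k, ← h0, EReal.coe_zero]

theorem norm_A_le (run : IsDSG1 f σ A η βs abar x z y c st a r σz)
    (hA0 : ∀ v, (‖A v‖ : EReal) ≤ σ v) (k : ℕ) : ‖A (z k)‖ ≤ σz k := by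
  have h := hA0 (z k)
  rwa [← run.sigma_eq k, EReal.coe_le_coe_iff] at h

theorem step_mul_sigma_le (run : IsDSG1 f σ A η βs abar x z y c st a r σz)
    (hpos : ∀ k, 0 < σz k) (k : ℕ) : st k * σz k ≤ c (k + 1) - c k := by
  rw [run.c_succ k]
  nlinarith [mul_pos (run.st_pos k) (hpos k), run.a_pos k]

theorem sub_le_mul_step_mul_sigma (run : IsDSG1 f σ A η βs abar x z y c st a r σz)
    (hpos : ∀ k, 0 < σz k) (k : ℕ) : c (k + 1) - c k ≤ (abar + 1) * (st k * σz k) := by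
  rw [run.c_succ k]
  nlinarith [mul_pos (run.st_pos k) (hpos k), run.a_lt k]

theorem monotone_c (run : IsDSG1 f σ A η βs abar x z y c st a r σz) (hpos : ∀ k, 0 < σz k) :
    Monotone c :=
  monotone_nat_of_le_succ fun k =>
    sub_nonneg.mp ((mul_pos (run.st_pos k) (hpos k)).le.trans (run.step_mul_sigma_le hpos k))

theorem dist_le_step_mul_sigma (run : IsDSG1 f σ A η βs abar x z y c st a r σz)
    (hAσ : ∀ k, ‖A (z k)‖ ≤ σz k) (k : ℕ) : dist (y k) (y (k + 1)) ≤ st k * σz k := by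
  rw [dist_eq_norm, run.y_succ k, sub_sub_cancel, norm_smul, Real.norm_of_nonneg (run.st_pos k).le]
  exact mul_le_mul_of_nonneg_left (hAσ k) (run.st_pos k).le

theorem norm_sub_sq_succ_le (run : IsDSG1 f σ A η βs abar x z y c st a r σz)
    (hAσ : ∀ k, ‖A (z k)‖ ≤ σz k) {yb : H} {κ B Mσ : ℝ}
    (hinner : ∀ k, (c k - κ) * σz k ≤ inner ℝ (A (z k)) (y k - yb)) (hB : ∀ k, st k ≤ B)
    (hMσ : ∀ k, σz k ≤ Mσ) (k : ℕ) :
    ‖y (k + 1) - yb‖ ^ 2 ≤ ‖y k - yb‖ ^ 2 + (2 * κ + B * Mσ - 2 * c k) * (st k * σz k) := by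
  have hst := run.st_pos k
  have hexpand : ‖y (k + 1) - yb‖ ^ 2 = ‖y k - yb‖ ^ 2
      - 2 * (st k * inner ℝ (A (z k)) (y k - yb)) + (st k * ‖A (z k)‖) ^ 2 := by
    rw [run.y_succ k, sub_right_comm, norm_sub_sq_real, real_inner_smul_right, real_inner_comm,
      norm_smul, Real.norm_of_nonneg hst.le]
  have hstep_le : st k * ‖A (z k)‖ ≤ B * Mσ :=
    mul_le_mul (hB k) ((hAσ k).trans (hMσ k)) (norm_nonneg _) (hst.le.trans (hB k))
  have hsq : (st k * ‖A (z k)‖) ^ 2 ≤ B * Mσ * (st k * σz k) := by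
    rw [sq]
    exact mul_le_mul hstep_le (mul_le_mul_of_nonneg_left (hAσ k) hst.le)
      (mul_nonneg hst.le (norm_nonneg _)) ((mul_nonneg hst.le (norm_nonneg _)).trans hstep_le)
  nlinarith [mul_le_mul_of_nonneg_left (hinner k) hst.le]

theorem sub_mul_le_inner_of_dualSol (run : IsDSG1 f σ A η βs abar x z y c st a r σz)
    (hc : ∀ k, 0 ≤ c k) {R : ℝ} (hΓ : ∀ k, r k ≤ R * σz k) {yb : H} {cb qb : ℝ}
    (hsol : DualSol f σ A yb cb) (hqb : dualq f σ A yb cb = qb) (k : ℕ) :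
    (c k - (cb + R)) * σz k ≤ inner ℝ (A (z k)) (y k - yb) := by
  have hu : lagr f σ A (y k) (c k) (x k) (z k) ≤ ((qb + R * σz k : ℝ) : EReal) := by
    rw [EReal.coe_add, ← hqb]
    exact (run.lagr_le k).trans (add_le_add (hsol.2 _ _ (hc k)) (EReal.coe_le_coe_iff.mpr (hΓ k)))
  have := sub_mul_le_inner_of_lagr (run.sigma_eq k).symm hu (hqb ▸ dualq_le_lagr yb cb _ _)
  linarith

theorem exists_bound_of_dualSol (run : IsDSG1 f σ A η βs abar x z y c st a r σz)
    (hσpos : ∀ v, 0 ≤ σ v) (hσargmin : ∀ v, σ v = 0 → v = 0)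
    (hA0 : ∀ v, (‖A v‖ : EReal) ≤ σ v) (hwd : ∀ y c, dualq f σ A y c ≤ MP φ) (hMP : MP φ ≠ ⊤)
    (hq0 : dualq f σ A (y 0) (c 0) ≠ ⊥) {R Mσ Mz : ℝ} (hΓ : ∀ k, r k ≤ R * σz k)
    (hMσ : ∀ k, σz k ≤ Mσ) (hMz : ∀ k, ‖z k‖ ≤ Mz) {yb : H} {cb : ℝ}
    (hsol : DualSol f σ A yb cb) : ∃ M : ℝ, ∀ k, ‖y k‖ + |c k| ≤ M := by
  have hpos := run.sigma_pos hσpos hσargmin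
  have hmono := run.monotone_c hpos
  have hc : ∀ k, 0 ≤ c k := fun k => run.c_zero_nonneg.trans (hmono k.zero_le)
  obtain ⟨qb, hqb⟩ : ∃ qb : ℝ, dualq f σ A yb cb = qb :=
    ⟨_, (EReal.coe_toReal ((hwd yb cb).trans_lt hMP.lt_top).ne
      (ne_bot_of_le_ne_bot hq0 (hsol.2 _ _ run.c_zero_nonneg))).symm⟩
  have hB : ∀ k, st k ≤ max βs (Mσ + Mz) := fun k =>
    (run.st_le_max k).trans (max_le_max le_rfl (add_le_add (hMσ k) (hMz k)))
  have hrec := run.norm_sub_sq_succ_le (run.norm_A_le hA0)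
    (run.sub_mul_le_inner_of_dualSol hc hΓ hsol hqb) hB hMσ
  have hd : ∀ k, 0 ≤ st k * σz k := fun k => (mul_pos (run.st_pos k) (hpos k)).le
  obtain ⟨Mc, hMc⟩ := bddAbove_range_of_potential (e := fun k => ‖y k - yb‖ ^ 2) hmono
    (by linarith [run.a_pos 0, run.a_lt 0]) hd (run.sub_le_mul_step_mul_sigma hpos)
    (fun k => sq_nonneg _) hrec
  have hcMc : ∀ k, c k ≤ Mc := fun k => hMc (Set.mem_range_self k)
  obtain ⟨E, hE⟩ : ∃ E, ∀ k, ‖y k - yb‖ ^ 2 ≤ E := ⟨_, fun k =>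
    (le_add_mul_sub_of_potential (e := fun k => ‖y k - yb‖ ^ 2) hmono hd
      (run.step_mul_sigma_le hpos) hrec k).trans
    (add_le_add_right (mul_le_mul_of_nonneg_left (sub_le_sub_right (hcMc k) _)
      (abs_nonneg _)) _)⟩
  refine ⟨‖yb‖ + √E + Mc, fun k => ?_⟩
  have hy : ‖y k - yb‖ ≤ √E := (abs_norm _).symm.trans_le (Real.abs_le_sqrt (hE k))
  rw [abs_of_nonneg (hc k)]
  linarith [norm_le_norm_add_norm_sub' (y k) yb, hcMc k, norm_sub_rev (y k) yb]

theorem exists_dualSol_tendsto [NormedAddCommGroup X] [NormedSpace ℝ X] [CompleteSpace H]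
    (run : IsDSG1 f σ A η βs abar x z y c st a r σz)
    (hdual : ∀ x, f x 0 = φ x) (hfbot : ∀ x z, f x z ≠ ⊥)
    (hflsc : WLsc2 fun p : X × H => f p.1 p.2) (hflev : WLevelCompact f)
    (hσpos : ∀ v, 0 ≤ σ v) (hσargmin : ∀ v, σ v = 0 → v = 0) (hσwlsc : WLsc σ)
    (hA0 : ∀ v, (‖A v‖ : EReal) ≤ σ v) (hwd : ∀ y c, dualq f σ A y c ≤ MP φ) (hη : 0 < η)
    (hbdd : ∀ w : ℕ → H, Antitone (fun k => σ (w k)) →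
      Tendsto (fun k => σ (w k)) atTop (𝓝 (0 : EReal)) → ∃ M : ℝ, ∀ k, ‖w k‖ ≤ M)
    {M : ℝ} (hM : ∀ k, ‖y k‖ + |c k| ≤ M) :
    ∃ (yl : H) (cl : ℝ), DualSol f σ A yl cl ∧
      Tendsto y atTop (𝓝 yl) ∧ Tendsto c atTop (𝓝 cl) := by
  have hpos := run.sigma_pos hσpos hσargmin
  have hAσ := run.norm_A_le hA0
  have hmono := run.monotone_c hpos
  have hcM : ∀ k, c k ≤ M := fun k =>
    (le_abs_self _).trans ((le_add_of_nonneg_left (norm_nonneg _)).trans (hM k))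
  obtain ⟨cl, hcl⟩ : ∃ cl, Tendsto c atTop (𝓝 cl) :=
    ⟨_, tendsto_atTop_ciSup hmono ⟨M, Set.forall_mem_range.mpr hcM⟩⟩
  obtain ⟨yl, hyl⟩ := cauchySeq_tendsto_of_complete <| cauchySeq_of_dist_le_sub hcM fun k =>
    (run.dist_le_step_mul_sigma hAσ k).trans (run.step_mul_sigma_le hpos k)
  have hcl_pos : 0 < cl :=
    (mul_pos (run.st_pos 0) (hpos 0)).trans_le <| (run.step_mul_sigma_le hpos 0).trans <|
      by linarith [hmono.ge_of_tendsto hcl 1, run.c_zero_nonneg]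
  have hstep : Tendsto (fun k => st k * σz k) atTop (𝓝 0) := by
    refine squeeze_zero (fun k => (mul_pos (run.st_pos k) (hpos k)).le)
      (run.step_mul_sigma_le hpos) ?_
    simpa using (hcl.comp (tendsto_add_atTop_nat 1)).sub hcl
  obtain ⟨hAz, hzmin⟩ := tendsto_zero_of_min_add_mul hη (fun k => norm_nonneg (A (z k)))
    (fun k => norm_nonneg (z k)) hAσ <| squeeze_zero
      (fun k => mul_nonneg (le_min hη.le (by positivity)) (hpos k).le)
      (fun k => mul_le_mul_of_nonneg_right (run.min_le_st k) (hpos k).le) hstep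
  obtain ⟨F, hF, hFle, hzF⟩ := exists_le_atTop_tendsto_toWeakSpace_zero hσwlsc hσpos hσargmin
    hbdd run.sigma_eq hpos hzmin
  have hMP := MP_le_dualq_of_tendsto hdual hfbot hflsc hflev hσpos run.lagr_le
    (fun k => run.c_zero_nonneg.trans (hmono k.zero_le)) hyl hcl hcl_pos run.r_tendsto hFle
    ((tendsto_zero_iff_norm_tendsto_zero.mpr hAz).mono_left hFle) hzF
  exact ⟨yl, cl, ⟨hcl_pos.le, fun y' c' _ => (hwd y' c').trans hMP⟩, hyl, hcl⟩

end IsDSG1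

theorem dsg1_dual_strong_convergence_general
    {X H : Type*} [NormedAddCommGroup X] [NormedSpace ℝ X]
    [NormedAddCommGroup H] [InnerProductSpace ℝ H] [CompleteSpace H]
    (φ : X → EReal)
    (hφproper : (∀ x, φ x ≠ ⊥) ∧ (∃ x, φ x ≠ ⊤))
    (f : X → H → EReal)
    (hdual : ∀ x, f x 0 = φ x)
    (hfproper : (∀ x z, f x z ≠ ⊥) ∧ (∃ x z, f x z ≠ ⊤))
    (hflsc : WLsc2 fun p : X × H => f p.1 p.2)
    (hflev : WLevelCompact f)
    (σ : H → EReal)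
    (hσpos : ∀ z, 0 ≤ σ z)
    (hσ0 : σ 0 = 0)
    (hσargmin : ∀ z, σ z = 0 → z = 0)
    (hσwlsc : WLsc σ)
    (A : H → H)
    (hA0 : ∀ z, (‖A z‖ : EReal) ≤ σ z)
    (x : ℕ → X) (z y : ℕ → H) (c st a r σz : ℕ → ℝ)
    (hσz : ∀ k, (σz k : EReal) = σ (z k))
    (abar : ℝ) (ha : ∀ k, 0 < a k ∧ a k < abar)
    (hst : ∀ k, 0 < st k)
    (hrlim : Tendsto r atTop (𝓝 0))
    (hc0 : 0 ≤ c 0) (hq0 : dualq f σ A (y 0) (c 0) ≠ ⊥)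
    (hxz : ∀ k, lagr f σ A (y k) (c k) (x k) (z k) ≤ dualq f σ A (y k) (c k) + (r k : EReal))
    (hy : ∀ k, y (k + 1) = y k - st k • A (z k))
    (hc : ∀ k, c (k + 1) = c k + (a k + 1) * st k * σz k)
    (η βs : ℝ) (hηpos : 0 < η)
    (hstep : ∀ k, min η (‖A (z k)‖ + ‖z k‖) ≤ st k ∧ st k ≤ max βs (σz k + ‖z k‖))
    (hz : ∀ k, z k ≠ 0) :
    ((∀ w : ℕ → H, Antitone (fun k => σ (w k)) →
        Tendsto (fun k => σ (w k)) atTop (𝓝 (0 : EReal)) → ∃ M : ℝ, ∀ k, ‖w k‖ ≤ M) →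
      MP φ = MD f σ A →
      (∃ M : ℝ, ∀ k, ‖y k‖ + |c k| ≤ M) →
      ∃ (yl : H) (cl : ℝ), DualSol f σ A yl cl ∧
        Tendsto y atTop (𝓝 yl) ∧ Tendsto c atTop (𝓝 cl)) ∧
    ((∀ w : ℕ → H, Antitone (fun k => σ (w k)) →
        Tendsto (fun k => σ (w k)) atTop (𝓝 (0 : EReal)) → ∃ M : ℝ, ∀ k, ‖w k‖ ≤ M) →
      MP φ = MD f σ A →
      (∃ R : ℝ, 0 < R ∧ ∀ k, r k ≤ R * σz k) →
      (∃ M : ℝ, ∀ k, σz k ≤ M) → (∃ M : ℝ, ∀ k, ‖z k‖ ≤ M) →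
      (∃ (yd : H) (cd : ℝ), DualSol f σ A yd cd) →
      ∃ (yl : H) (cl : ℝ), DualSol f σ A yl cl ∧
        Tendsto y atTop (𝓝 yl) ∧ Tendsto c atTop (𝓝 cl)) := by
  have run : IsDSG1 f σ A η βs abar x z y c st a r σz :=
    ⟨hσz, fun k => (ha k).1, fun k => (ha k).2, hst, hrlim, hc0, hxz, hy, hc,
      fun k => (hstep k).1, fun k => (hstep k).2, hz⟩
  have hwd : ∀ y c, dualq f σ A y c ≤ MP φ :=
    dualq_le_MP hdual hσ0 (map_zero_eq_zero_of_norm_le hσ0 hA0)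
  have hMP : MP φ ≠ ⊤ := by
    obtain ⟨x₀, hx₀⟩ := hφproper.2
    exact ((iInf_le _ x₀).trans_lt hx₀.lt_top).ne
  have part_i := fun hbdd M (hM : ∀ k, ‖y k‖ + |c k| ≤ M) =>
    run.exists_dualSol_tendsto hdual hfproper.1 hflsc hflev hσpos hσargmin hσwlsc hA0 hwd hηpos
      hbdd hM
  refine ⟨fun hbdd _ ⟨M, hM⟩ => part_i hbdd M hM, ?_⟩
  rintro hbdd - ⟨R, -, hΓ⟩ ⟨Mσ, hMσ⟩ ⟨Mz, hMz⟩ ⟨yd, cd, hsol⟩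
  obtain ⟨M, hM⟩ :=
    run.exists_bound_of_dualSol hσpos hσargmin hA0 hwd hMP hq0 hΓ hMσ hMz hsol
  exact part_i hbdd M hM

/-- Strong dual convergence of DSG-1. (i) If `σ(w_k) ↓ 0` implies
boundedness of `{w_k}`, strong duality holds and the dual sequence is bounded, then the
dual solution set is nonempty and the dual sequence converges strongly to a dual
solution. (ii) If additionally `(Γ₀)` holds and `{σ(z_k)}`, `{z_k}` are bounded, then
nonemptiness of the dual solution set implies strong convergence of the dual sequence to
a dual solution. -/
theorem dsg1_dual_strong_convergence
    {X H : Type*} [NormedAddCommGroup X] [NormedSpace ℝ X] [CompleteSpace X]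
    [NormedAddCommGroup H] [InnerProductSpace ℝ H] [CompleteSpace H]
    (hrefl : IsReflexiveSpace X)
    (φ : X → EReal)
    (hφproper : (∀ x, φ x ≠ ⊥) ∧ (∃ x, φ x ≠ ⊤))
    (hφwlsc : WLsc φ)
    (hφlev : ∀ α : ℝ, WCompact {x : X | φ x ≤ (α : EReal)})
    (f : X → H → EReal)
    (hdual : ∀ x, f x 0 = φ x)
    (hfproper : (∀ x z, f x z ≠ ⊥) ∧ (∃ x z, f x z ≠ ⊤))
    (hflsc : WLsc2 fun p : X × H => f p.1 p.2)
    (hflev : WLevelCompact f)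
    (σ : H → EReal)
    (hσpos : ∀ z, 0 ≤ σ z)
    (hσ0 : σ 0 = 0)
    (hσargmin : ∀ z, σ z = 0 → z = 0)
    (hσwlsc : WLsc σ)
    (A : H → H)
    (hA0 : ∀ z, (‖A z‖ : EReal) ≤ σ z)
    (hA1 : ∀ y : H, WUsc fun z => (inner ℝ (A z) y : ℝ))
    (x : ℕ → X) (z y : ℕ → H) (c st a r σz : ℕ → ℝ)
    (hσz : ∀ k, (σz k : EReal) = σ (z k))
    (abar : ℝ) (habar : 0 < abar) (ha : ∀ k, 0 < a k ∧ a k < abar)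
    (hst : ∀ k, 0 < st k)
    (hrpos : ∀ k, 0 ≤ r k) (hrlim : Tendsto r atTop (𝓝 0))
    (hc0 : 0 ≤ c 0) (hq0 : dualq f σ A (y 0) (c 0) ≠ ⊥)
    (hxz : ∀ k, lagr f σ A (y k) (c k) (x k) (z k) ≤ dualq f σ A (y k) (c k) + (r k : EReal))
    (hy : ∀ k, y (k + 1) = y k - st k • A (z k))
    (hc : ∀ k, c (k + 1) = c k + (a k + 1) * st k * σz k)
    (η βs : ℝ) (hηpos : 0 < η) (hηβ : η < βs)
    (hstep : ∀ k, min η (‖A (z k)‖ + ‖z k‖) ≤ st k ∧ st k ≤ max βs (σz k + ‖z k‖))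
    (ab : ℝ) (hab : 0 < ab) (halb : ∀ k, ab ≤ a k)
    (hz : ∀ k, z k ≠ 0) :
    ((∀ w : ℕ → H, Antitone (fun k => σ (w k)) →
        Tendsto (fun k => σ (w k)) atTop (𝓝 (0 : EReal)) → ∃ M : ℝ, ∀ k, ‖w k‖ ≤ M) →
      MP φ = MD f σ A →
      (∃ M : ℝ, ∀ k, ‖y k‖ + |c k| ≤ M) →
      ∃ (yl : H) (cl : ℝ), DualSol f σ A yl cl ∧
        Tendsto y atTop (𝓝 yl) ∧ Tendsto c atTop (𝓝 cl)) ∧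
    ((∀ w : ℕ → H, Antitone (fun k => σ (w k)) →
        Tendsto (fun k => σ (w k)) atTop (𝓝 (0 : EReal)) → ∃ M : ℝ, ∀ k, ‖w k‖ ≤ M) →
      MP φ = MD f σ A →
      (∃ R : ℝ, 0 < R ∧ ∀ k, r k ≤ R * σz k) →
      (∃ M : ℝ, ∀ k, σz k ≤ M) → (∃ M : ℝ, ∀ k, ‖z k‖ ≤ M) →
      (∃ (yd : H) (cd : ℝ), DualSol f σ A yd cd) →
      ∃ (yl : H) (cl : ℝ), DualSol f σ A yl cl ∧
        Tendsto y atTop (𝓝 yl) ∧ Tendsto c atTop (𝓝 cl)) :=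
  dsg1_dual_strong_convergence_general φ hφproper f hdual hfproper hflsc hflev σ hσpos hσ0 hσargmin
    hσwlsc A hA0 x z y c st a r σz hσz abar ha hst hrlim hc0 hq0 hxz hy hc η βs hηpos hstep hz
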